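/- Let J be a q×q periodic Jacobi matrix with negative off-diagonal entries β₀,…,β_{q-1} < 0, and let J⁻ be obtained from J by replacing the corner entries β_{q-1} with -β_{q-1}. Then the characteristic polynomials satisfy det(J⁻ - λI) = det(J - λI) + 4·(-1)^q·β₀β₁⋯β_{q-1} for all λ ∈ ℝ. -/

import Mathlib

/-!
Let `T` be `J - λ` with its two corner entries replaced by `0`, an open Jacobi matrix, and let
`E` be the matrix unit at `(0, q-1)`. With `c = β_{q-1}`, `J - λ = T + c E + c Eᵀ` and
`J⁻ - λ = T - c E - c Eᵀ`. The determinant is affine in each entry, so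
`det (T + x E + y Eᵀ) = det T + x A + y A' + x y B`, where `A` and `A'` are cofactors of `T`.
The `x y` term is invariant under `(x, y) ↦ (-x, -y)`, so the two determinants differ by
`2c (A + A')`; both cofactors are `(-1)^(q-1) β₀⋯β_{q-2}`, the determinant of a triangular minor.
-/

open Matrix

namespace Matrix

variable {n R : Type*} [Fintype n] [DecidableEq n] [CommRing R]

theorem det_add_single (M : Matrix n n R) (i j : n) (c : R) :
    det (M + single i j c) = det M + c * adjugate M j i := by
  have hrow : M + single i j c = updateRow M i (M i + c • Pi.single j 1) := by
    ext k l
    by_cases hk : k = i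
    · subst hk; simp [single_apply, Pi.single_apply, eq_comm]
    · simp [single_apply_of_row_ne (Ne.symm hk), updateRow_ne hk]
  rw [hrow, det_updateRow_add, updateRow_eq_self, det_updateRow_smul, adjugate_apply]

omit [Fintype n] in
theorem updateRow_add_single_of_ne (M : Matrix n n R) {i k : n} (hik : i ≠ k) (j : n) (c : R)
    (v : n → R) : updateRow (M + single i j c) k v = updateRow M k v + single i j c := by
  ext a b
  by_cases ha : a = k
  · subst ha; simp [single_apply_of_row_ne hik]
  · simp [updateRow_ne ha]

theorem det_add_single_add_single (M : Matrix n n R) {i k : n} (hik : i ≠ k) (j l : n)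
    (x y : R) :
    det (M + single i j x + single k l y) = det M + x * adjugate M j i + y * adjugate M l k +
      x * y * adjugate (updateRow M k (Pi.single l 1)) j i := by
  rw [det_add_single, det_add_single, adjugate_apply (M + _), updateRow_add_single_of_ne _ hik,
    det_add_single, ← adjugate_apply]
  ring

theorem det_add_single_add_single_sub_neg (M : Matrix n n R) {i k : n} (hik : i ≠ k) (j l : n)
    (x y : R) :
    det (M + single i j x + single k l y) - det (M + single i j (-x) + single k l (-y)) =
      2 * (x * adjugate M j i + y * adjugate M l k) := by
  rw [det_add_single_add_single _ hik, det_add_single_add_single _ hik]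
  ring

end Matrix

variable {R : Type*} [CommRing R] {n : ℕ}

/-- In `jacobiMatrix` adjacency is tested in `ℕ`, whereas in `periodicJacobiMatrix` the test
`j = i + 1` is in `Fin n` and wraps around, producing the corner entries `b (n - 1)`. -/
def jacobiMatrix (a b : Fin n → R) : Matrix (Fin n) (Fin n) R :=
  of fun i j => if i = j then a i else if (j : ℕ) = i + 1 then b i
    else if (i : ℕ) = j + 1 then b j else 0

def periodicJacobiMatrix [NeZero n] (a b : Fin n → R) : Matrix (Fin n) (Fin n) R :=
  of fun i j => if i = j then a i else if j = i + 1 then b i else if i = j + 1 then b j else 0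

theorem jacobiMatrix_transpose (a b : Fin n → R) :
    (jacobiMatrix a b)ᵀ = jacobiMatrix a b := by
  ext i j
  simp only [jacobiMatrix, transpose_apply, of_apply]
  split_ifs <;> grind

theorem jacobiMatrix_sub_smul_one (a b : Fin n → R) (c : R) :
    jacobiMatrix a b - c • 1 = jacobiMatrix (fun i => a i - c) b := by
  ext i j
  by_cases h : i = j
  · simp [jacobiMatrix, h]
  · simp [jacobiMatrix, h, one_apply_ne h]

theorem det_jacobiMatrix_submatrix_succ_castSucc (a b : Fin (n + 1) → R) :
    det ((jacobiMatrix a b).submatrix Fin.succ Fin.castSucc) = ∏ i : Fin n, b i.castSucc := by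
  rw [det_of_isUpperTriangular]
  · refine Finset.prod_congr rfl fun i _ => ?_
    simp [jacobiMatrix, Fin.ext_iff, add_assoc]
  · intro i j (hji : (j : ℕ) < i)
    simp only [jacobiMatrix, submatrix_apply, of_apply, Fin.ext_iff, Fin.val_succ,
      Fin.val_castSucc]
    split_ifs <;> first | rfl | omega

theorem adjugate_jacobiMatrix_last_zero (a b : Fin (n + 1) → R) :
    adjugate (jacobiMatrix a b) (Fin.last n) 0 = (-1) ^ n * ∏ i : Fin n, b i.castSucc := by
  rw [adjugate_fin_succ_eq_det_submatrix, Fin.succAbove_zero, Fin.succAbove_last,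
    det_jacobiMatrix_submatrix_succ_castSucc]
  simp

theorem adjugate_jacobiMatrix_zero_last (a b : Fin (n + 1) → R) :
    adjugate (jacobiMatrix a b) 0 (Fin.last n) = (-1) ^ n * ∏ i : Fin n, b i.castSucc := by
  rw [← adjugate_jacobiMatrix_last_zero a b, ← transpose_apply (adjugate _),
    adjugate_transpose, jacobiMatrix_transpose]

theorem periodicJacobiMatrix_eq (a b : Fin (n + 3) → R) :
    periodicJacobiMatrix a b = jacobiMatrix a b + single 0 (Fin.last _) (b (Fin.last _)) +
      single (Fin.last _) 0 (b (Fin.last _)) := by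
  ext i j
  simp only [periodicJacobiMatrix, jacobiMatrix, Matrix.add_apply, of_apply, single_apply,
    Fin.ext_iff, Fin.val_add_one, Fin.val_last, Fin.val_zero]
  split_ifs <;> first | omega | simp only [add_zero, zero_add]
  all_goals congr 1; ext; simp only [Fin.val_last]; omega

theorem of_ite_corners_periodicJacobiMatrix (a b : Fin (n + 3) → R) (c : R) :
    (of fun i j => if (i = 0 ∧ j = Fin.last _) ∨ (i = Fin.last _ ∧ j = 0) then c
      else periodicJacobiMatrix a b i j) =
      jacobiMatrix a b + single 0 (Fin.last _) c + single (Fin.last _) 0 c := by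
  ext i j
  simp only [periodicJacobiMatrix, jacobiMatrix, Matrix.add_apply, of_apply, single_apply,
    Fin.ext_iff, Fin.val_add_one, Fin.val_last, Fin.val_zero]
  split_ifs <;> first | omega | simp only [add_zero, zero_add]

theorem det_companion_jacobi_general (m : ℕ) (α β : Fin (m + 3) → ℝ)
    (J Jm : Matrix (Fin (m + 3)) (Fin (m + 3)) ℝ)
    (hJ : J = Matrix.of fun i j =>
      if i = j then α i
      else if j = i + 1 then β i
      else if i = j + 1 then β j
      else 0)
    (hJm : Jm = Matrix.of fun i j =>
      if (i = 0 ∧ j = Fin.last (m + 2)) ∨ (i = Fin.last (m + 2) ∧ j = 0) then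
        -β (Fin.last (m + 2))
      else J i j) :
    ∀ lam : ℝ,
      (Jm - lam • (1 : Matrix (Fin (m + 3)) (Fin (m + 3)) ℝ)).det =
        (J - lam • (1 : Matrix (Fin (m + 3)) (Fin (m + 3)) ℝ)).det +
          4 * (-1) ^ (m + 3) * ∏ i, β i := by
  intro lam
  set L := Fin.last (m + 2)
  have hper : J = periodicJacobiMatrix α β := hJ
  subst hJm
  rw [hper, of_ite_corners_periodicJacobiMatrix, periodicJacobiMatrix_eq]
  simp only [add_sub_right_comm _ _ (lam • 1 : Matrix (Fin (m + 3)) (Fin (m + 3)) ℝ),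
    jacobiMatrix_sub_smul_one]
  have hflip := det_add_single_add_single_sub_neg (jacobiMatrix (fun i => α i - lam) β)
    (Fin.last_pos.ne : (0 : Fin (m + 3)) ≠ L) L 0 (β L) (β L)
  rw [adjugate_jacobiMatrix_last_zero, adjugate_jacobiMatrix_zero_last] at hflip
  rw [Fin.prod_univ_castSucc β]
  linear_combination -hflip

/-- For a `q × q` periodic Jacobi matrix `J` (`q = m + 3 ≥ 3`) with negative
off-diagonal entries, and `J⁻` obtained by flipping the sign of the corner
entries `β_{q-1}`, one has
`det(J⁻ - λI) = det(J - λI) + 4·(-1)^q·β₀β₁⋯β_{q-1}`. -/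
theorem det_companion_jacobi (m : ℕ) (α β : Fin (m + 3) → ℝ) (hβ : ∀ i, β i < 0)
    (J Jm : Matrix (Fin (m + 3)) (Fin (m + 3)) ℝ)
    (hJ : J = Matrix.of fun i j =>
      if i = j then α i
      else if j = i + 1 then β i
      else if i = j + 1 then β j
      else 0)
    (hJm : Jm = Matrix.of fun i j =>
      if (i = 0 ∧ j = Fin.last (m + 2)) ∨ (i = Fin.last (m + 2) ∧ j = 0) then
        -β (Fin.last (m + 2))
      else J i j) :
    ∀ lam : ℝ,
      (Jm - lam • (1 : Matrix (Fin (m + 3)) (Fin (m + 3)) ℝ)).det =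
        (J - lam • (1 : Matrix (Fin (m + 3)) (Fin (m + 3)) ℝ)).det +
          4 * (-1) ^ (m + 3) * ∏ i, β i :=
  det_companion_jacobi_general m α β J Jm hJ hJm
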